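/- arXiv:2309.02063 — 3 statements merged into one kernel-verified Lean document; each statement's English description precedes it below -/
import Mathlib

section
/- Let Φ : Mat₂(ℂ) → Mat₂(ℂ) be a ℂ-linear map that is unital, i.e. Φ(I) = I, and let U be a 2×2 unitary matrix with associated conjugation superoperator Ad_U : ρ ↦ UρU†. Let ρ₀⁽ʲ⁾ = (1/2)(I + σ_j) for j = 1,2,3 (the density matrices whose Bloch vectors are the standard basis vectors e₁, e₂, e₃ of ℝ³). Then ‖Φ − Ad_U‖²_HS = 6 · (1/3) Σ_{j=1}^{3} ‖Φ(ρ₀⁽ʲ⁾) − Uρ₀⁽ʲ⁾U†‖²_HS, i.e. the squared Hilbert–Schmidt distance between the superoperators equals six times the mean squared Hilbert–Schmidt distance of their actions on the three states ρ₀⁽¹⁾, ρ₀⁽²⁾, ρ₀⁽³⁾. -/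
open Matrix

noncomputable section

/-- The Pauli matrices `σ₀ = I, σ₁ = σ_x, σ₂ = σ_y, σ₃ = σ_z`. -/
def pauli : Fin 4 → Matrix (Fin 2) (Fin 2) ℂ
  | 0 => 1
  | 1 => !![0, 1; 1, 0]
  | 2 => !![0, -Complex.I; Complex.I, 0]
  | 3 => !![1, 0; 0, -1]

/-- Squared Hilbert–Schmidt norm `‖A‖² = Tr(A†A)` of a 2×2 complex matrix. -/
def hsSq (A : Matrix (Fin 2) (Fin 2) ℂ) : ℂ := (Aᴴ * A).trace

/-- The density matrices `ρ₀⁽ʲ⁾ = (1/2)(I + σ_j)`, j = 1,2,3, whose Bloch vectors are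
the standard basis vectors of ℝ³. -/
def rho0 (j : Fin 3) : Matrix (Fin 2) (Fin 2) ℂ := (2 : ℂ)⁻¹ • (1 + pauli j.succ)


/-! Both `Φ` and `Ad_U` are unital, so their difference `Δ` kills `σ₀ = I`. Hence
`Δ ρ₀⁽ʲ⁾ = Δ σ_j / 2`, and both sides equal `(1/2) Σ_{j=1}^3 ‖Δ σ_j‖²`. -/

@[simps]
def conjSuperop {n : Type*} [Fintype n] (U : Matrix n n ℂ) : Matrix n n ℂ →ₗ[ℂ] Matrix n n ℂ where
  toFun ρ := U * ρ * Uᴴ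
  map_add' _ _ := by simp only [Matrix.mul_add, Matrix.add_mul]
  map_smul' _ _ := by simp only [Matrix.mul_smul, Matrix.smul_mul, RingHom.id_apply]

lemma conjSuperop_one {n : Type*} [Fintype n] [DecidableEq n] {U : Matrix n n ℂ}
    (hU : U ∈ unitaryGroup n ℂ) : conjSuperop U 1 = 1 := by
  simpa [star_eq_conjTranspose] using mem_unitaryGroup_iff.mp hU

lemma LinearMap.map_smul_one_add_of_map_one_eq_zero {R M N : Type*} [CommSemiring R]
    [Semiring M] [Module R M] [AddCommMonoid N] [Module R N] {f : M →ₗ[R] N} (hf : f 1 = 0)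
    (c : R) (A : M) : f (c • (1 + A)) = c • f A := by
  rw [map_smul, map_add, hf, zero_add]

@[simp]
lemma pauli_zero : pauli 0 = 1 := rfl

lemma hsSq_zero : hsSq 0 = 0 := by simp [hsSq]

lemma hsSq_smul (c : ℂ) (A : Matrix (Fin 2) (Fin 2) ℂ) :
    hsSq (c • A) = (‖c‖ ^ 2 : ℝ) * hsSq A := by
  simp only [hsSq, conjTranspose_smul, Matrix.smul_mul, Matrix.mul_smul, trace_smul, smul_smul,
    smul_eq_mul, Complex.star_def, Complex.mul_conj']
  push_cast
  ring

/-- For a unital linear superoperator `Φ` on 2×2 matrices and a unitary `U`, the squared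
Hilbert–Schmidt distance between `Φ` and `Ad_U : ρ ↦ UρU†` (computed in the orthonormal
basis `σ_i/√2`) equals six times the mean squared Hilbert–Schmidt distance of their actions
on the three states `ρ₀⁽ʲ⁾ = (1/2)(I + σ_j)`. -/
theorem hs_dist_superop_eq_six_mul_mean_of_unital
    (Φ : Matrix (Fin 2) (Fin 2) ℂ →ₗ[ℂ] Matrix (Fin 2) (Fin 2) ℂ)
    (hΦ : Φ 1 = 1)
    (U : Matrix (Fin 2) (Fin 2) ℂ) (hU : U ∈ Matrix.unitaryGroup (Fin 2) ℂ) :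
    ∑ i : Fin 4, hsSq (((Real.sqrt 2 : ℂ))⁻¹ • (Φ (pauli i) - U * pauli i * Uᴴ)) =
      6 * ((3 : ℂ)⁻¹ * ∑ j : Fin 3, hsSq (Φ (rho0 j) - U * rho0 j * Uᴴ)) := by
  set Δ := Φ - conjSuperop U
  have hΔ_one : Δ 1 = 0 := by
    simp only [Δ, LinearMap.sub_apply, hΦ, conjSuperop_one hU, sub_self]
  have hΔ_rho0 (j : Fin 3) : Δ (rho0 j) = (2 : ℂ)⁻¹ • Δ (pauli j.succ) :=
    Δ.map_smul_one_add_of_map_one_eq_zero hΔ_one _ _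
  show ∑ i : Fin 4, hsSq (_ • Δ (pauli i)) = 6 * (_ * ∑ j : Fin 3, hsSq (Δ (rho0 j)))
  rw [Fin.sum_univ_succ, pauli_zero, hΔ_one, smul_zero, hsSq_zero, zero_add]
  simp only [hΔ_rho0, hsSq_smul]
  have hnorm_inv_sqrt_two : ‖((√2 : ℝ) : ℂ)⁻¹‖ ^ 2 = 2⁻¹ := by simp [inv_pow]
  have hnorm_inv_two : ‖(2 : ℂ)⁻¹‖ ^ 2 = 4⁻¹ := by norm_num
  rw [hnorm_inv_sqrt_two, hnorm_inv_two, ← Finset.mul_sum, ← Finset.mul_sum]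
  push_cast
  ring
end
end

section
/- Let A : ℝ → Mat_n(ℂ) be differentiable at x with derivative A'(x). Then the matrix exponential x ↦ e^{A(x)} is differentiable at x and d/dx e^{A(x)} = ∫₀¹ e^{s A(x)} A'(x) e^{(1−s) A(x)} ds. -/
/-!
Duhamel's formula `e^B - e^C = ∫₀¹ e^{sB} (B - C) e^{(1-s)C} ds` follows from the fundamental
theorem of calculus applied to `s ↦ e^{sB} e^{(1-s)C}`. With `B = A y` and `C = A x`, dividing by
`y - x` writes the difference quotient of `e^A` as `Φ (A y, (A y - A x) / (y - x))`, where
`Φ (B, M) = ∫₀¹ e^{sB} M e^{(1-s) A x} ds` is jointly continuous; let `y → x`.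
-/

open NormedSpace Filter Topology

theorem hasDerivAt_exp_smul_mul_exp_one_sub_smul {𝔸 : Type*} [NormedRing 𝔸]
    [NormedAlgebra ℝ 𝔸] [CompleteSpace 𝔸] (B C : 𝔸) (t : ℝ) :
    HasDerivAt (fun t : ℝ => exp (t • B) * exp ((1 - t) • C))
      (exp (t • B) * (B - C) * exp ((1 - t) • C)) t := by
  have hC : HasDerivAt (fun t : ℝ => exp ((1 - t) • C)) (-(C * exp ((1 - t) • C))) t := by
    simpa [Function.comp_def] using
      (hasDerivAt_exp_smul_const' C (1 - t)).scomp t ((hasDerivAt_id t).const_sub 1)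
  refine ((hasDerivAt_exp_smul_const B t).mul hC).congr_deriv ?_
  rw [mul_neg, ← sub_eq_add_neg, ← mul_assoc, ← sub_mul, ← mul_sub]

namespace Matrix

variable {m 𝕜 : Type*} [Fintype m] [DecidableEq m] [RCLike 𝕜]

/- The sup norm is not submultiplicative, so the calculus of `exp` is done in the `L^∞` operator
norm; both norms induce the product topology, so these norm-free statements hold for either. -/
section OperatorNorm

open scoped Norms.Operator

@[fun_prop]
theorem continuous_exp : Continuous (exp : Matrix m m 𝕜 → Matrix m m 𝕜) :=
  exp_continuous

theorem tendsto_slope_exp_smul_mul_exp_one_sub_smul (B C : Matrix m m 𝕜) (t : ℝ) :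
    Tendsto (slope (fun t : ℝ => exp (t • B) * exp ((1 - t) • C)) t) (𝓝[≠] t)
      (𝓝 (exp (t • B) * (B - C) * exp ((1 - t) • C))) :=
  hasDerivAt_iff_tendsto_slope.mp (_root_.hasDerivAt_exp_smul_mul_exp_one_sub_smul B C t)

end OperatorNorm

attribute [local instance] Matrix.normedAddCommGroup Matrix.normedSpace

theorem exp_sub_exp_eq_integral (B C : Matrix m m 𝕜) :
    exp B - exp C = ∫ s in (0:ℝ)..1, exp (s • B) * (B - C) * exp ((1 - s) • C) := by
  rw [intervalIntegral.integral_eq_sub_of_hasDerivAt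
    (fun s _ => hasDerivAt_iff_tendsto_slope.mpr <|
      tendsto_slope_exp_smul_mul_exp_one_sub_smul B C s)
    (Continuous.intervalIntegrable (by fun_prop) 0 1)]
  simp

theorem continuous_integral_exp_smul_mul_mul_exp_one_sub_smul (C : Matrix m m 𝕜) :
    Continuous fun p : Matrix m m 𝕜 × Matrix m m 𝕜 =>
      ∫ s in (0:ℝ)..1, exp (s • p.1) * p.2 * exp ((1 - s) • C) :=
  intervalIntegral.continuous_parametric_intervalIntegral_of_continuous' (by fun_prop) 0 1

end Matrix

open Matrix

attribute [local instance] Matrix.normedAddCommGroup Matrix.normedSpace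

/-- Wilcox integral formula: if `A : ℝ → Mat_n(ℂ)` is differentiable at `x` with derivative
`A'`, then `x ↦ e^{A(x)}` is differentiable at `x` and
`d/dx e^{A(x)} = ∫₀¹ e^{s A(x)} A'(x) e^{(1−s) A(x)} ds`. -/
theorem wilcox_deriv_exp {n : ℕ} (A : ℝ → Matrix (Fin n) (Fin n) ℂ)
    (A' : Matrix (Fin n) (Fin n) ℂ) (x : ℝ) (hA : HasDerivAt A A' x) :
    HasDerivAt (fun y => exp (A y))
      (∫ s in (0:ℝ)..1, exp (s • A x) * A' * exp ((1 - s) • A x)) x := by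
  have hA_slope : Tendsto (fun y => (A y, slope A x y)) (𝓝[≠] x) (𝓝 (A x, A')) :=
    (hA.continuousAt.tendsto.mono_left nhdsWithin_le_nhds).prodMk_nhds
      (hasDerivAt_iff_tendsto_slope.mp hA)
  have hΦ := (continuous_integral_exp_smul_mul_mul_exp_one_sub_smul (A x)).tendsto (A x, A')
  refine hasDerivAt_iff_tendsto_slope.mpr <| (hΦ.comp hA_slope).congr fun y => ?_
  simp only [Function.comp_apply, slope_def_module, exp_sub_exp_eq_integral (A y) (A x),
    ← intervalIntegral.integral_smul, mul_smul_comm, smul_mul_assoc]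
end

section
/- Let ψ, φ ∈ ℂ² be unit vectors with ⟨ψ, φ⟩ ≠ 0 and |ψ⟩⟨ψ| ≠ |φ⟩⟨φ| (i.e. the two pure states are distinct and non-orthogonal). If two 2×2 unitary matrices U and V satisfy U|ψ⟩⟨ψ|U† = V|ψ⟩⟨ψ|V† and U|φ⟩⟨φ|U† = V|φ⟩⟨φ|V†, then there exists c ∈ ℂ with |c| = 1 such that U = cV; equivalently, UρU† = VρV† for every 2×2 matrix ρ. Thus any two distinct non-orthogonal pure qubit states distinguish unitary operations. -/
/-!
Conjugation by `W` maps `|x⟩⟨x|` to `|Wx⟩⟨Wx|`, and a rank-one projection determines its vector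
up to a scalar, so `Uψ = a • Vψ` and `Uφ = b • Vφ`. Both unitaries preserve inner products, so
`|a| = 1` and `ā b ⟨ψ, φ⟩ = ⟨ψ, φ⟩`; non-orthogonality gives `b = a`. Unit vectors with distinct
projections are linearly independent, hence a basis of `ℂ²` on which `U` and `a • V` agree.
-/

open Matrix

noncomputable section

/-- The rank-one projection `|ψ⟩⟨ψ|` onto a vector `ψ ∈ ℂ²`. -/
def proj (ψ : Fin 2 → ℂ) : Matrix (Fin 2) (Fin 2) ℂ :=
  Matrix.vecMulVec ψ (star ψ)

namespace Matrix

theorem mul_vecMulVec_star_mul_conjTranspose {n α : Type*} [Fintype n] [Semiring α] [StarRing α]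
    (W : Matrix n n α) (x : n → α) :
    W * vecMulVec x (star x) * Wᴴ = vecMulVec (W *ᵥ x) (star (W *ᵥ x)) := by
  rw [mul_vecMulVec, vecMulVec_mul, star_mulVec]

section CommRing

variable {n α : Type*} [CommRing α] [StarRing α]

theorem vecMulVec_smul_star_smul (a : α) (x : n → α) :
    vecMulVec (a • x) (star (a • x)) = (a * star a) • vecMulVec x (star x) := by
  rw [star_smul, smul_vecMulVec, vecMulVec_smul, smul_smul]

variable [Fintype n]

theorem star_smul_dotProduct_smul (a b : α) (x y : n → α) :
    star (a • x) ⬝ᵥ (b • y) = star a * b * (star x ⬝ᵥ y) := by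
  simp only [star_smul, smul_dotProduct, dotProduct_smul, smul_eq_mul]
  ring

theorem smul_mul_mul_conjTranspose_smul {c : α} (hc : star c * c = 1) (V ρ : Matrix n n α) :
    c • V * ρ * (c • V)ᴴ = V * ρ * Vᴴ := by
  rw [conjTranspose_smul, smul_mul, smul_mul, Matrix.mul_smul, smul_smul, mul_comm, hc, one_smul]

variable [DecidableEq n]

theorem star_mulVec_dotProduct_mulVec {W : Matrix n n α} (hW : W ∈ unitaryGroup n α)
    (x y : n → α) : star (W *ᵥ x) ⬝ᵥ (W *ᵥ y) = star x ⬝ᵥ y := by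
  rw [star_mulVec, ← dotProduct_mulVec, mulVec_mulVec, ← star_eq_conjTranspose,
    (mem_unitaryGroup_iff').mp hW, one_mulVec]

theorem star_mul_mul_dotProduct_eq_of_mulVec_eq_smul {U V : Matrix n n α}
    (hU : U ∈ unitaryGroup n α) (hV : V ∈ unitaryGroup n α) {x y : n → α} {a b : α}
    (hx : U *ᵥ x = a • V *ᵥ x) (hy : U *ᵥ y = b • V *ᵥ y) :
    star a * b * (star x ⬝ᵥ y) = star x ⬝ᵥ y :=
  calc star a * b * (star x ⬝ᵥ y) = star (U *ᵥ x) ⬝ᵥ (U *ᵥ y) := by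
        rw [hx, hy, star_smul_dotProduct_smul, star_mulVec_dotProduct_mulVec hV]
    _ = star x ⬝ᵥ y := star_mulVec_dotProduct_mulVec hU x y

end CommRing

theorem ext_of_mulVec_eq {n ι K : Type*} [Fintype n] [Fintype ι] [Field K]
    {A B : Matrix n n K} {v : ι → n → K} (hv : LinearIndependent K v)
    (hcard : Fintype.card ι = Fintype.card n) (h : ∀ i, A *ᵥ v i = B *ᵥ v i) : A = B :=
  ext_iff_mulVec.mpr <| LinearMap.congr_fun (f := A.mulVecLin) (g := B.mulVecLin) <|
    LinearMap.ext_on_range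
      (hv.span_eq_top_of_card_eq_finrank' (hcard.trans (Module.finrank_fintype_fun_eq_card K).symm))
      h

end Matrix

section RCLike

open scoped ComplexOrder

variable {n 𝕜 : Type*} [Fintype n] [RCLike 𝕜]

theorem exists_smul_eq_of_vecMulVec_star_eq {x y : n → 𝕜} (hy : y ≠ 0)
    (h : vecMulVec x (star x) = vecMulVec y (star y)) : ∃ a : 𝕜, x = a • y := by
  have hxy := congrArg (· *ᵥ y) h
  simp only [vecMulVec_mulVec, op_smul_eq_smul] at hxy
  have hyy : star y ⬝ᵥ y ≠ 0 := dotProduct_star_self_eq_zero.not.mpr hy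
  have hxy0 : star x ⬝ᵥ y ≠ 0 := by
    rintro h0
    rw [h0, zero_smul, eq_comm, smul_eq_zero] at hxy
    exact hy (hxy.resolve_left hyy)
  refine ⟨(star y ⬝ᵥ y) / (star x ⬝ᵥ y), ?_⟩
  rw [div_eq_inv_mul, mul_smul, ← hxy, smul_smul, inv_mul_cancel₀ hxy0, one_smul]

theorem linearIndependent_pair_of_vecMulVec_star_ne {ψ φ : n → 𝕜} (hψ : star ψ ⬝ᵥ ψ = 1)
    (hφ : star φ ⬝ᵥ φ = 1) (hne : vecMulVec ψ (star ψ) ≠ vecMulVec φ (star φ)) :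
    LinearIndependent 𝕜 ![ψ, φ] := by
  have hψ0 : ψ ≠ 0 := by rintro rfl; simp at hψ
  refine (LinearIndependent.pair_iff' hψ0).mpr fun a hφa => hne ?_
  rw [← hφa, star_smul_dotProduct_smul, hψ, mul_one] at hφ
  rw [← hφa, vecMulVec_smul_star_smul, mul_comm, hφ, one_smul]

theorem exists_mulVec_eq_smul_mulVec_of_conj_eq [DecidableEq n] {U V : Matrix n n 𝕜}
    (hV : V ∈ unitaryGroup n 𝕜) {x : n → 𝕜} (hx : x ≠ 0)
    (h : U * vecMulVec x (star x) * Uᴴ = V * vecMulVec x (star x) * Vᴴ) :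
    ∃ a : 𝕜, U *ᵥ x = a • V *ᵥ x := by
  have hVx : V *ᵥ x ≠ 0 := by
    rwa [Ne, ← dotProduct_star_self_eq_zero, star_mulVec_dotProduct_mulVec hV,
      dotProduct_star_self_eq_zero]
  rw [mul_vecMulVec_star_mul_conjTranspose, mul_vecMulVec_star_mul_conjTranspose] at h
  exact exists_smul_eq_of_vecMulVec_star_eq hVx h

end RCLike

/-- Two distinct non-orthogonal pure qubit states distinguish unitary operations: if unit
vectors `ψ, φ` satisfy `⟨ψ,φ⟩ ≠ 0` and `|ψ⟩⟨ψ| ≠ |φ⟩⟨φ|`, and unitaries `U, V` agree under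
conjugation on both projections, then `U = cV` for some phase `c` (`|c| = 1`); equivalently
`UρU† = VρV†` for every 2×2 matrix `ρ`. -/
theorem nonorthogonal_states_distinguish_unitaries
    (ψ φ : Fin 2 → ℂ)
    (hψ : star ψ ⬝ᵥ ψ = 1) (hφ : star φ ⬝ᵥ φ = 1)
    (hno : star ψ ⬝ᵥ φ ≠ 0) (hne : proj ψ ≠ proj φ)
    (U V : Matrix (Fin 2) (Fin 2) ℂ)
    (hU : U ∈ Matrix.unitaryGroup (Fin 2) ℂ) (hV : V ∈ Matrix.unitaryGroup (Fin 2) ℂ)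
    (h1 : U * proj ψ * Uᴴ = V * proj ψ * Vᴴ)
    (h2 : U * proj φ * Uᴴ = V * proj φ * Vᴴ) :
    (∃ c : ℂ, ‖c‖ = 1 ∧ U = c • V) ∧
    ∀ ρ : Matrix (Fin 2) (Fin 2) ℂ, U * ρ * Uᴴ = V * ρ * Vᴴ := by
  have hψ0 : ψ ≠ 0 := by rintro rfl; simp at hψ
  obtain ⟨a, ha⟩ := exists_mulVec_eq_smul_mulVec_of_conj_eq hV hψ0 h1
  obtain ⟨b, hb⟩ := exists_mulVec_eq_smul_mulVec_of_conj_eq hV (by rintro rfl; simp at hno) h2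
  have haa : star a * a = 1 := by
    simpa only [hψ, mul_one] using star_mul_mul_dotProduct_eq_of_mulVec_eq_smul hU hV ha ha
  have hab : star a * b = 1 :=
    (mul_eq_right₀ hno).mp (star_mul_mul_dotProduct_eq_of_mulVec_eq_smul hU hV ha hb)
  have hba : b = a := by linear_combination a * hab - b * haa
  have hUa : U = a • V := by
    refine ext_of_mulVec_eq (linearIndependent_pair_of_vecMulVec_star_ne hψ hφ hne) rfl ?_
    simp only [Fin.forall_fin_two, cons_val_zero, cons_val_one, smul_mulVec]
    exact ⟨ha, hba ▸ hb⟩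
  exact ⟨⟨a, CStarRing.norm_of_mem_unitary (Unitary.mem_iff_star_mul_self.mpr haa), hUa⟩,
    fun ρ => hUa ▸ smul_mul_mul_conjTranspose_smul haa V ρ⟩
end
end
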